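/- Let p be an integer and let T be a tree with maximum degree Δ(T) = 2^p − 3 ≥ 5 such that every vertex of degree 2 has at least one neighbor of degree 2. If T is not a (2^p − 3)-regular tree, then T has a (ℤ_2)^p-twin edge coloring. -/
import Mathlib
set_option linter.unusedSectionVars false
set_option maxHeartbeats 1000000


open Finset SimpleGraph

/-- A `𝒢`-twin edge coloring of `G`: a proper edge labeling `f : E(G) → 𝒢` such that
the induced weighted degrees `w(v) = ∑_{u ∈ N(v)} f(uv)` differ on adjacent vertices. -/
def IsTwinEdgeColoring {V : Type} [Fintype V] (G : SimpleGraph V) [DecidableRel G.Adj]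
    {A : Type} [AddCommGroup A] (f : Sym2 V → A) : Prop :=
  (∀ u v w : V, G.Adj u v → G.Adj u w → v ≠ w → f s(u, v) ≠ f s(u, w)) ∧
  (∀ u v : V, G.Adj u v →
    ∑ x ∈ G.neighborFinset u, f s(x, u) ≠ ∑ x ∈ G.neighborFinset v, f s(x, v))


/-- A tree is `r`-regular if every non-leaf vertex has degree `r`. -/
def IsRegularTreeDeg {V : Type} [Fintype V] (G : SimpleGraph V) [DecidableRel G.Adj]
    (r : ℕ) : Prop :=
  ∀ v : V, G.degree v ≠ 1 → G.degree v = r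

section Alg
variable {A : Type} [AddCommGroup A] [Fintype A] [DecidableEq A]
variable (h2 : ∀ a : A, a + a = 0) (hcard : 8 ≤ Fintype.card A)

/-- pick an element outside a small finset -/
lemma exists_notin (F : Finset A) (hF : F.card < Fintype.card A) : ∃ x : A, x ∉ F := by
  by_contra h
  push_neg at h
  have : (Finset.univ : Finset A) ⊆ F := fun x _ => h x
  have := Finset.card_le_card this
  simp [Finset.card_univ] at this
  omega

include h2 in
lemma char2_sub (a b : A) : a - b = a + b := by
  rw [sub_eq_add_neg, neg_eq_of_add_eq_zero_right (h2 b)]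

include h2 hcard in
lemma exists_pair (F : Finset A) (hF : F.card ≤ 3) (s : A) (hs : s ≠ 0) :
    ∃ C : Finset A, C.card = 2 ∧ ∑ x ∈ C, x = s ∧ ∀ x ∈ C, x ∉ F := by
  obtain ⟨x, hx⟩ := exists_notin (A := A) (F ∪ F.image (· + s)) (by
    have h1 : (F ∪ F.image (· + s)).card ≤ F.card + (F.image (· + s)).card := Finset.card_union_le _ _
    have h2 : (F.image (· + s)).card ≤ F.card := Finset.card_image_le
    omega)
  simp only [Finset.mem_union, Finset.mem_image, not_or, not_exists] at hx
  refine ⟨{x, x + s}, ?_, ?_, ?_⟩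
  · rw [Finset.card_insert_of_notMem (by simp [hs]), Finset.card_singleton]
  · rw [Finset.sum_insert (by simp [hs]), Finset.sum_singleton]
    rw [← add_assoc, h2 x, zero_add]
  · intro y hy
    simp only [Finset.mem_insert, Finset.mem_singleton] at hy
    rcases hy with rfl | rfl
    · exact hx.1
    · intro hmem
      exact hx.2 (x + s) ⟨hmem, by rw [add_assoc, h2, add_zero]⟩

include h2 in
lemma c2 {a b : A} (h : a + b = 0) : a = b := by
  have := congrArg (· + b) h
  simpa [add_assoc, h2 b] using this

include h2 in
lemma c2' {a b : A} (h : a = b) : a + b = 0 := by rw [h]; exact h2 b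

include h2 hcard in
lemma exists_triple (F : Finset A) (hF : F.card ≤ 2) (s : A) :
    ∃ C : Finset A, C.card = 3 ∧ ∑ x ∈ C, x = s ∧ ∀ x ∈ C, x ∉ F := by
  obtain ⟨x, hx⟩ := exists_notin (A := A) (insert s F) (by
    have := Finset.card_insert_le s F; omega)
  simp only [Finset.mem_insert, not_or] at hx
  obtain ⟨y, hy⟩ := exists_notin (A := A)
      (insert s (insert x (F ∪ F.image (· + (x + s))))) (by
    have c1 := Finset.card_insert_le s (insert x (F ∪ F.image (· + (x + s))))
    have c2 := Finset.card_insert_le x (F ∪ F.image (· + (x + s)))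
    have c3 := Finset.card_union_le F (F.image (· + (x + s)))
    have c4 : (F.image (· + (x + s))).card ≤ F.card := Finset.card_image_le
    omega)
  simp only [Finset.mem_insert, Finset.mem_union, Finset.mem_image, not_or, not_exists] at hy
  obtain ⟨hys, hyx, hyF, hyI⟩ := hy
  set z := x + y + s with hz
  rw [hz] at *
  have hzx : x + y + s ≠ x := by
    intro h
    apply hys
    apply c2 h2
    have : x + (y + s) = x + 0 := by rw [add_zero, ← add_assoc]; exact h
    exact add_left_cancel this
  have hzy : x + y + s ≠ y := by
    intro h
    apply hx.1
    apply c2 h2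
    have : y + (x + s) = y + 0 := by
      rw [add_zero]
      calc y + (x + s) = x + y + s := by abel
      _ = y := h
    exact add_left_cancel this
  have hzF : x + y + s ∉ F := by
    intro h
    refine hyI (x + y + s) ⟨h, ?_⟩
    calc x + y + s + (x + s) = y + ((x + x) + (s + s)) := by abel
    _ = y := by rw [h2, h2, add_zero, add_zero]
  refine ⟨{x, y, x + y + s}, ?_, ?_, ?_⟩
  · rw [Finset.card_insert_of_notMem (by simp [Ne.symm hyx, Ne.symm hzx]),
      Finset.card_insert_of_notMem (by simpa using Ne.symm hzy), Finset.card_singleton]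
  · rw [Finset.sum_insert (by simp [Ne.symm hyx, Ne.symm hzx]),
      Finset.sum_insert (by simpa using Ne.symm hzy), Finset.sum_singleton]
    calc x + (y + (x + y + s)) = s + ((x + x) + (y + y)) := by abel
    _ = s := by rw [h2, h2, add_zero, add_zero]
  · intro w hw
    simp only [Finset.mem_insert, Finset.mem_singleton] at hw
    rcases hw with rfl | rfl | rfl
    · exact hx.2
    · exact hyF
    · exact hzF

include h2 in
lemma step_lemma (F : Finset A) (h0 : (0:A) ∈ F) (C : Finset A)
    (hCF : ∀ x ∈ C, x ∉ F) (hne : C.Nonempty)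
    (hb : 2 * (C.card + F.card) ≤ Fintype.card A + 1) :
    ∃ C' : Finset A, C'.card = C.card + 1 ∧ ∑ x ∈ C', x = ∑ x ∈ C, x ∧ ∀ x ∈ C', x ∉ F := by
  obtain ⟨c, hc⟩ := hne
  have hc0 : c ≠ 0 := fun h => hCF c hc (h ▸ h0)
  set D := C ∪ F with hD
  set Bad := D ∪ D.image (· + c) with hBad
  have hDcard : D.card ≤ C.card + F.card := Finset.card_union_le _ _
  have hsub : ({0, c} : Finset A) ⊆ D ∩ D.image (· + c) := by
    intro x hx
    simp only [Finset.mem_insert, Finset.mem_singleton] at hx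
    rw [Finset.mem_inter]
    rcases hx with h | h
    · rw [h]
      refine ⟨Finset.mem_union_right _ h0, ?_⟩
      rw [Finset.mem_image]
      exact ⟨c, Finset.mem_union_left _ hc, h2 c⟩
    · rw [h]
      refine ⟨Finset.mem_union_left _ hc, ?_⟩
      rw [Finset.mem_image]
      exact ⟨0, Finset.mem_union_right _ h0, zero_add c⟩
  have h2card : 2 ≤ (D ∩ D.image (· + c)).card := by
    have : ({0, c} : Finset A).card = 2 := by
      rw [Finset.card_insert_of_notMem (by simpa using Ne.symm hc0), Finset.card_singleton]
    rw [← this]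
    exact Finset.card_le_card hsub
  have hBadcard : Bad.card < Fintype.card A := by
    have he := Finset.card_union_add_card_inter D (D.image (· + c))
    rw [← hBad] at he
    have himg : (D.image (· + c)).card ≤ D.card := Finset.card_image_le
    omega
  obtain ⟨u, hu⟩ := exists_notin (A := A) Bad hBadcard
  have huD : u ∉ D := fun h => hu (Finset.mem_union_left _ h)
  have hucD : u + c ∉ D := by
    intro h
    apply hu
    refine Finset.mem_union_right _ ?_
    rw [Finset.mem_image]
    refine ⟨u + c, h, ?_⟩
    rw [add_assoc, h2, add_zero]
  have huc : u ≠ u + c := by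
    intro h
    apply hc0
    have : u + 0 = u + c := by rw [add_zero]; exact h
    exact (add_left_cancel this).symm
  have huC : u ∉ C := fun h => huD (Finset.mem_union_left _ h)
  have hucC : u + c ∉ C := fun h => hucD (Finset.mem_union_left _ h)
  refine ⟨insert u (insert (u + c) (C.erase c)), ?_, ?_, ?_⟩
  · rw [Finset.card_insert_of_notMem, Finset.card_insert_of_notMem,
      Finset.card_erase_of_mem hc]
    · have : 1 ≤ C.card := Finset.card_pos.2 ⟨c, hc⟩
      omega
    · exact fun h => hucC (Finset.mem_of_mem_erase h)
    · simp only [Finset.mem_insert]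
      push_neg
      exact ⟨huc, fun h => huC (Finset.mem_of_mem_erase h)⟩
  · rw [Finset.sum_insert, Finset.sum_insert]
    · rw [← Finset.add_sum_erase C _ hc, ← add_assoc]
      congr 1
      calc u + (u + c) = c + (u + u) := by abel
      _ = c := by rw [h2, add_zero]
    · exact fun h => hucC (Finset.mem_of_mem_erase h)
    · simp only [Finset.mem_insert]
      push_neg
      exact ⟨huc, fun h => huC (Finset.mem_of_mem_erase h)⟩
  · intro x hx
    simp only [Finset.mem_insert] at hx
    rcases hx with rfl | rfl | hx
    · exact fun h => huD (Finset.mem_union_right _ h)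
    · exact fun h => hucD (Finset.mem_union_right _ h)
    · exact hCF x (Finset.mem_of_mem_erase hx)


include h2 hcard in
lemma qlem (F : Finset A) (h0 : (0:A) ∈ F) (hF : F.card ≤ 2)
    (k : ℕ) (hk : 3 ≤ k) :
    2 * (k + F.card) ≤ Fintype.card A + 3 → ∀ s : A,
    ∃ C : Finset A, C.card = k ∧ ∑ x ∈ C, x = s ∧ ∀ x ∈ C, x ∉ F := by
  induction k, hk using Nat.le_induction with
  | base =>
    intro _ s
    exact exists_triple h2 hcard F hF s
  | succ k hk ih =>
    intro hb s
    obtain ⟨C, hCc, hCs, hCF⟩ := ih (by omega) s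
    obtain ⟨C', h1, h2', h3⟩ := step_lemma h2 F h0 C hCF
      (Finset.card_pos.1 (by omega)) (by omega)
    exact ⟨C', by omega, by rw [h2', hCs], h3⟩

include h2 hcard in
lemma subset_sum_zero (hσ : ∑ x : A, x = 0) (F : Finset A) (h0 : (0:A) ∈ F) (hF : F.card ≤ 2)
    (d : ℕ) (hd3 : 3 ≤ d) (hdn : d + F.card + 2 ≤ Fintype.card A)
    (hne : d + F.card + 2 = Fintype.card A → ∑ x ∈ F, x ≠ 0) :
    ∃ C : Finset A, C.card = d ∧ ∑ x ∈ C, x = 0 ∧ ∀ x ∈ C, x ∉ F := by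
  by_cases hsmall : 2 * (d + F.card) ≤ Fintype.card A + 3
  · exact qlem h2 hcard F h0 hF d hd3 hsmall 0
  · -- complement construction
    set m := Fintype.card A - F.card - d with hm
    have hFu : F ⊆ Finset.univ := Finset.subset_univ F
    have hcardFc : (Finset.univ \ F).card = Fintype.card A - F.card := by
      rw [Finset.card_sdiff_of_subset hFu, Finset.card_univ]
    have hσF : ∑ x ∈ Finset.univ \ F, x + ∑ x ∈ F, x = 0 := by
      rw [Finset.sum_sdiff hFu]; exact hσ
    have hσF' : ∑ x ∈ Finset.univ \ F, x = ∑ x ∈ F, x := c2 h2 hσF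
    have hm2 : 2 ≤ m := by omega
    have hX : ∃ X : Finset A, X.card = m ∧ ∑ x ∈ X, x = ∑ x ∈ F, x ∧ ∀ x ∈ X, x ∉ F := by
      rcases Nat.lt_or_ge m 3 with hm3 | hm3
      · -- m = 2, need sum ≠ 0
        have hmm : m = 2 := by omega
        have hFs : ∑ x ∈ F, x ≠ 0 := hne (by omega)
        obtain ⟨X, hX1, hX2, hX3⟩ := exists_pair h2 hcard F (by omega) (∑ x ∈ F, x) hFs
        exact ⟨X, by omega, hX2, hX3⟩
      · exact qlem h2 hcard F h0 hF m hm3 (by omega) _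
    obtain ⟨X, hX1, hX2, hX3⟩ := hX
    have hXsub : X ⊆ Finset.univ \ F := by
      intro x hx
      rw [Finset.mem_sdiff]
      exact ⟨Finset.mem_univ x, hX3 x hx⟩
    refine ⟨(Finset.univ \ F) \ X, ?_, ?_, ?_⟩
    · rw [Finset.card_sdiff_of_subset hXsub, hcardFc]; omega
    · have := Finset.sum_sdiff (f := id) hXsub
      simp only [id] at this
      rw [hX2, hσF'] at this
      have h' : ∑ x ∈ (Finset.univ \ F) \ X, x + ∑ x ∈ F, x = 0 + ∑ x ∈ F, x := by
        rw [zero_add]; exact this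
      exact add_right_cancel h'
    · intro x hx
      rw [Finset.mem_sdiff, Finset.mem_sdiff] at hx
      exact hx.1.2


include h2 hcard in
lemma local_choice (hσ : ∑ x : A, x = 0) (a0 t : A) (d : ℕ)
    (hd : d + 4 ≤ Fintype.card A) :
    ∃ C : Finset A, C.card = d ∧ (a0 ≠ 0 → t ≠ a0 →
      ((∀ x ∈ C, x ≠ 0 ∧ x ≠ a0) ∧ (a0 + ∑ x ∈ C, x) ∉ C ∧ a0 + ∑ x ∈ C, x ≠ t)) := by
  by_cases hpre : a0 ≠ 0 ∧ t ≠ a0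
  · obtain ⟨ha0, hta⟩ := hpre
    match d, hd with
    | 0, hd =>
      refine ⟨∅, rfl, fun _ _ => ⟨by simp, by simp, ?_⟩⟩
      rw [Finset.sum_empty, add_zero]
      exact Ne.symm hta
    | 1, hd =>
      obtain ⟨c, hc⟩ := exists_notin (A := A) {0, a0, a0 + t} (by
        have := Finset.card_insert_le (0:A) {a0, a0 + t}
        have := Finset.card_insert_le a0 ({a0 + t} : Finset A)
        have := Finset.card_singleton (a0 + t)
        omega)
      simp only [Finset.mem_insert, Finset.mem_singleton, not_or] at hc
      obtain ⟨hc0, hca, hcat⟩ := hc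
      refine ⟨{c}, Finset.card_singleton c, fun _ _ => ⟨?_, ?_, ?_⟩⟩
      · intro x hx; rw [Finset.mem_singleton] at hx; subst hx; exact ⟨hc0, hca⟩
      · rw [Finset.sum_singleton, Finset.mem_singleton]
        intro h
        apply ha0
        have : a0 + c = 0 + c := by rw [zero_add]; exact h
        exact add_right_cancel this
      · rw [Finset.sum_singleton]
        intro h
        apply hcat
        have : a0 + c = a0 + (a0 + t) := by
          rw [h, ← add_assoc, h2, zero_add]
        exact add_left_cancel this
    | 2, hd =>
      obtain ⟨c₁, hc₁⟩ := exists_notin (A := A) {0, a0} (by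
        have := Finset.card_insert_le (0:A) ({a0} : Finset A); simp at *; omega)
      simp only [Finset.mem_insert, Finset.mem_singleton, not_or] at hc₁
      obtain ⟨c₂, hc₂⟩ := exists_notin (A := A) {0, a0, c₁, c₁ + a0 + t} (by
        have h1 := Finset.card_insert_le (0:A) {a0, c₁, c₁ + a0 + t}
        have h2 := Finset.card_insert_le a0 {c₁, c₁ + a0 + t}
        have h3 := Finset.card_insert_le c₁ ({c₁ + a0 + t} : Finset A)
        have h4 := Finset.card_singleton (c₁ + a0 + t)
        omega)
      simp only [Finset.mem_insert, Finset.mem_singleton, not_or] at hc₂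
      obtain ⟨hc₂0, hc₂a, hc₂c, hc₂t⟩ := hc₂
      have hne12 : c₁ ≠ c₂ := fun h => hc₂c h.symm
      refine ⟨{c₁, c₂}, ?_, fun _ _ => ⟨?_, ?_, ?_⟩⟩
      · rw [Finset.card_insert_of_notMem (by simpa using hne12), Finset.card_singleton]
      · intro x hx
        simp only [Finset.mem_insert, Finset.mem_singleton] at hx
        rcases hx with h | h
        · rw [h]; exact ⟨hc₁.1, hc₁.2⟩
        · rw [h]; exact ⟨hc₂0, hc₂a⟩
      · rw [Finset.sum_insert (by simpa using hne12), Finset.sum_singleton,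
          Finset.mem_insert, Finset.mem_singleton]
        push_neg
        constructor
        · intro h
          apply hc₂a
          apply (c2 h2 _).symm
          have : c₁ + (a0 + c₂) = c₁ + 0 := by
            rw [add_zero]
            calc c₁ + (a0 + c₂) = a0 + (c₁ + c₂) := by abel
            _ = c₁ := h
          exact add_left_cancel this
        · intro h
          apply hc₁.2
          have hh : c₂ + (a0 + c₁) = c₂ + 0 := by
            rw [add_zero]
            calc c₂ + (a0 + c₁) = a0 + (c₁ + c₂) := by abel
            _ = c₂ := h
          exact ((c2 h2 (add_left_cancel hh)).symm : c₁ = a0)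
      · rw [Finset.sum_insert (by simpa using hne12), Finset.sum_singleton]
        intro h
        apply hc₂t
        calc c₂ = c₁ + a0 + (a0 + (c₁ + c₂)) := by
              have e : c₂ + ((a0 + a0) + (c₁ + c₁)) = c₁ + a0 + (a0 + (c₁ + c₂)) := by abel
              rw [← e, h2, h2, add_zero, add_zero]
        _ = c₁ + a0 + t := by rw [h]
    | (k+3), hd =>
      have ha2 : ({0, a0} : Finset A).card ≤ 2 := by
        have := Finset.card_insert_le (0:A) ({a0} : Finset A); simp at *; omega
      obtain ⟨C, hC1, hC2, hC3⟩ := subset_sum_zero h2 hcard hσ {0, a0}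
        (Finset.mem_insert_self 0 _) ha2 (k+3) (by omega)
        (by
          have : ({0, a0} : Finset A).card = 2 := by
            rw [Finset.card_insert_of_notMem (by simpa using Ne.symm ha0), Finset.card_singleton]
          omega)
        (by
          intro _
          rw [Finset.sum_insert (by simpa using Ne.symm ha0), Finset.sum_singleton, zero_add]
          exact ha0)
      refine ⟨C, hC1, fun _ _ => ⟨?_, ?_, ?_⟩⟩
      · intro x hx
        have := hC3 x hx
        simp only [Finset.mem_insert, Finset.mem_singleton, not_or] at this
        exact this
      · rw [hC2, add_zero]
        intro h
        have := hC3 a0 h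
        simp at this
      · rw [hC2, add_zero]
        exact Ne.symm hta
  · -- preconditions fail: any set of the right size
    obtain ⟨C, _, hC⟩ := Finset.exists_subset_card_eq (s := (Finset.univ : Finset A)) (n := d)
      (by rw [Finset.card_univ]; omega)
    exact ⟨C, hC, fun h1 h3 => absurd ⟨h1, h3⟩ hpre⟩

include h2 hcard in
lemma root_choice (hσ : ∑ x : A, x = 0) (d : ℕ) (hd2 : 2 ≤ d) (hd : d + 4 ≤ Fintype.card A) :
    ∃ C : Finset A, C.card = d ∧ (∀ x ∈ C, x ≠ 0) ∧ (∑ x ∈ C, x) ∉ C := by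
  match d, hd2, hd with
  | 2, _, hd =>
    obtain ⟨c₁, hc₁⟩ := exists_notin (A := A) {0} (by simp; omega)
    rw [Finset.mem_singleton] at hc₁
    obtain ⟨c₂, hc₂⟩ := exists_notin (A := A) {0, c₁} (by
      have := Finset.card_insert_le (0:A) ({c₁} : Finset A); simp at *; omega)
    simp only [Finset.mem_insert, Finset.mem_singleton, not_or] at hc₂
    have hne : c₁ ≠ c₂ := fun h => hc₂.2 h.symm
    refine ⟨{c₁, c₂}, ?_, ?_, ?_⟩
    · rw [Finset.card_insert_of_notMem (by simpa using hne), Finset.card_singleton]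
    · intro x hx
      simp only [Finset.mem_insert, Finset.mem_singleton] at hx
      rcases hx with h | h
      · rw [h]; exact hc₁
      · rw [h]; exact hc₂.1
    · rw [Finset.sum_insert (by simpa using hne), Finset.sum_singleton,
        Finset.mem_insert, Finset.mem_singleton]
      push_neg
      constructor
      · intro h
        have hh : c₁ + c₂ = c₁ + 0 := by rw [add_zero]; exact h
        exact hc₂.1 (add_left_cancel hh)
      · intro h
        have hh : c₂ + c₁ = c₂ + 0 := by rw [add_zero, add_comm]; exact h
        exact hc₁ (add_left_cancel hh)
  | (k+3), _, hd =>
    obtain ⟨C, hC1, hC2, hC3⟩ := subset_sum_zero h2 hcard hσ {0}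
      (Finset.mem_singleton_self 0) (by simp) (k+3) (by omega)
      (by simp; omega) (by simp; omega)
    refine ⟨C, hC1, ?_, ?_⟩
    · intro x hx
      have := hC3 x hx
      simpa using this
    · rw [hC2]
      intro h
      have := hC3 0 h
      simp at this

end Alg

lemma zmod2_add_self (a : ZMod 2) : a + a = 0 := by revert a; decide

lemma pi_add_self (p : ℕ) (f : Fin p → ZMod 2) : f + f = 0 := by
  funext i; exact zmod2_add_self (f i)

lemma sum_univ_pi_zmod2 (p : ℕ) (hp : 2 ≤ p) :
    ∑ f : Fin p → ZMod 2, f = 0 := by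
  funext i
  rw [Finset.sum_apply, Pi.zero_apply]
  rw [Fintype.sum_equiv (Equiv.piSplitAt i (fun _ : Fin p => ZMod 2))
    (fun f => f i) (fun q => q.1) (fun f => rfl)]
  rw [Fintype.sum_prod_type]
  simp only [Finset.sum_const, Finset.card_univ]
  rw [Finset.sum_nsmul]
  have hsub : Fintype.card {j : Fin p // j ≠ i} = p - 1 := by
    simp [Fintype.card_subtype_compl]
  have hcard : Fintype.card ({j : Fin p // j ≠ i} → ZMod 2) = 2 ^ (p - 1) := by
    rw [Fintype.card_fun, ZMod.card, hsub]
  rw [hcard]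
  have hsum : ∑ x : ZMod 2, x = 1 := by decide
  rw [hsum]
  have h1 : (2 ^ (p - 1)) • (1 : ZMod 2) = ((2 ^ (p-1) : ℕ) : ZMod 2) := by
    rw [nsmul_eq_mul, mul_one]
  rw [h1, (ZMod.natCast_eq_zero_iff _ 2)]
  exact dvd_pow_self 2 (by omega)

section Tree
variable {V : Type} [Fintype V] {T : SimpleGraph V} [DecidableRel T.Adj]
variable (hT : T.IsTree) (r : V)

include hT in
lemma exists_parent {v : V} (hne : v ≠ r) :
    ∃ u : V, T.Adj v u ∧ T.dist r u + 1 = T.dist r v := by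
  classical
  have hconn := hT.isConnected
  obtain ⟨w, hw⟩ := hconn.exists_walk_length_eq_dist r v
  rcases hrev : w.reverse with _ | ⟨hadj, q⟩
  · exact absurd rfl hne
  · rename_i u
    refine ⟨u, hadj, ?_⟩
    have hlen := congrArg SimpleGraph.Walk.length hrev
    rw [SimpleGraph.Walk.length_reverse, SimpleGraph.Walk.length_cons] at hlen
    have h1 : T.dist r u ≤ q.length := by
      have := SimpleGraph.dist_le q.reverse
      rwa [SimpleGraph.Walk.length_reverse] at this
    have h2 : T.dist r v ≤ T.dist r u + 1 := by
      have ht := hconn.dist_triangle (u := r) (v := u) (w := v)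
      have hd1 : T.dist u v = 1 := by
        rw [SimpleGraph.dist_eq_one_iff_adj]
        exact hadj.symm
      omega
    omega

end Tree

section Tree2
variable {V : Type} [Fintype V] {T : SimpleGraph V} [DecidableRel T.Adj]
variable (hT : T.IsTree) (r : V)

include hT in
lemma parent_unique {v u₁ u₂ : V} (h1 : T.Adj v u₁) (h2 : T.Adj v u₂)
    (hd1 : T.dist r u₁ + 1 = T.dist r v) (hd2 : T.dist r u₂ + 1 = T.dist r v) :
    u₁ = u₂ := by
  classical
  have hconn := hT.isConnected
  obtain ⟨w₁, hw₁⟩ := hconn.exists_walk_length_eq_dist u₁ r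
  obtain ⟨w₂, hw₂⟩ := hconn.exists_walk_length_eq_dist u₂ r
  set q₁ := w₁.bypass with hq₁
  set q₂ := w₂.bypass with hq₂
  have hl₁ : q₁.length ≤ T.dist r u₁ := by
    rw [SimpleGraph.dist_comm]
    rw [← hw₁]
    exact SimpleGraph.Walk.length_bypass_le w₁
  have hl₂ : q₂.length ≤ T.dist r u₂ := by
    rw [SimpleGraph.dist_comm, ← hw₂]
    exact SimpleGraph.Walk.length_bypass_le w₂
  have hv₁ : v ∉ q₁.support := by
    intro hm
    have := SimpleGraph.dist_le (q₁.dropUntil v hm)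
    have := SimpleGraph.Walk.length_dropUntil_le q₁ hm
    have : T.dist v r ≤ T.dist r u₁ := by omega
    rw [SimpleGraph.dist_comm] at this
    omega
  have hv₂ : v ∉ q₂.support := by
    intro hm
    have := SimpleGraph.dist_le (q₂.dropUntil v hm)
    have := SimpleGraph.Walk.length_dropUntil_le q₂ hm
    have : T.dist v r ≤ T.dist r u₂ := by omega
    rw [SimpleGraph.dist_comm] at this
    omega
  have hp₁ : (SimpleGraph.Walk.cons h1 q₁).IsPath := by
    rw [SimpleGraph.Walk.cons_isPath_iff]
    exact ⟨SimpleGraph.Walk.bypass_isPath w₁, hv₁⟩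
  have hp₂ : (SimpleGraph.Walk.cons h2 q₂).IsPath := by
    rw [SimpleGraph.Walk.cons_isPath_iff]
    exact ⟨SimpleGraph.Walk.bypass_isPath w₂, hv₂⟩
  have := SimpleGraph.isAcyclic_iff_path_unique.mp hT.IsAcyclic
    ⟨SimpleGraph.Walk.cons h1 q₁, hp₁⟩ ⟨SimpleGraph.Walk.cons h2 q₂, hp₂⟩
  have hwe : SimpleGraph.Walk.cons h1 q₁ = SimpleGraph.Walk.cons h2 q₂ :=
    congrArg Subtype.val this
  have hsup := congrArg SimpleGraph.Walk.support hwe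
  rw [SimpleGraph.Walk.support_cons, SimpleGraph.Walk.support_cons] at hsup
  have hsup2 : q₁.support = q₂.support := by
    injection hsup
  rw [SimpleGraph.Walk.support_eq_cons q₁, SimpleGraph.Walk.support_eq_cons q₂] at hsup2
  injection hsup2

include hT in
lemma adj_dist_ne {u v : V} (h : T.Adj u v) : T.dist r u ≠ T.dist r v := by
  classical
  intro heq
  have hconn := hT.isConnected
  by_cases hk : T.dist r u = 0
  · have hu : r = u := (hconn.dist_eq_zero_iff).1 hk
    have hk2 : T.dist r v = 0 := by omega
    have hv : r = v := (hconn.dist_eq_zero_iff).1 hk2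
    exact h.ne (hu.symm.trans hv)
  obtain ⟨w₁, hw₁⟩ := hconn.exists_walk_length_eq_dist u r
  obtain ⟨w₂, hw₂⟩ := hconn.exists_walk_length_eq_dist v r
  set q₁ := w₁.bypass with hq₁
  set q₂ := w₂.bypass with hq₂
  have hl₁ : q₁.length = T.dist r u := by
    have h1 : q₁.length ≤ T.dist r u := by
      rw [SimpleGraph.dist_comm, ← hw₁]; exact SimpleGraph.Walk.length_bypass_le w₁
    have h2 : T.dist r u ≤ q₁.length := by
      rw [SimpleGraph.dist_comm (u := r)]
      exact SimpleGraph.dist_le q₁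
    omega
  have hl₂ : q₂.length = T.dist r v := by
    have h1 : q₂.length ≤ T.dist r v := by
      rw [SimpleGraph.dist_comm, ← hw₂]; exact SimpleGraph.Walk.length_bypass_le w₂
    have h2 : T.dist r v ≤ q₂.length := by
      rw [SimpleGraph.dist_comm (u := r)]
      exact SimpleGraph.dist_le q₂
    omega
  have hv₁ : v ∉ q₁.support := by
    intro hm
    have hts := congrArg SimpleGraph.Walk.length (q₁.take_spec hm)
    rw [SimpleGraph.Walk.length_append] at hts
    have hdrop := SimpleGraph.dist_le (q₁.dropUntil v hm)
    have htake : 1 ≤ (q₁.takeUntil v hm).length := by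
      by_contra hc
      push_neg at hc
      have : (q₁.takeUntil v hm).length = 0 := by omega
      exact h.ne' (SimpleGraph.Walk.eq_of_length_eq_zero this).symm
    have : T.dist v r = T.dist r v := SimpleGraph.dist_comm
    omega
  have hp₁ : (SimpleGraph.Walk.cons h.symm q₁).IsPath := by
    rw [SimpleGraph.Walk.cons_isPath_iff]
    exact ⟨SimpleGraph.Walk.bypass_isPath w₁, hv₁⟩
  have := SimpleGraph.isAcyclic_iff_path_unique.mp hT.IsAcyclic
    ⟨SimpleGraph.Walk.cons h.symm q₁, hp₁⟩ ⟨q₂, SimpleGraph.Walk.bypass_isPath w₂⟩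
  have hwe : SimpleGraph.Walk.cons h.symm q₁ = q₂ := congrArg Subtype.val this
  have hlen := congrArg SimpleGraph.Walk.length hwe
  rw [SimpleGraph.Walk.length_cons] at hlen
  omega

end Tree2

section Tree3
variable {V : Type} [Fintype V] {T : SimpleGraph V} [DecidableRel T.Adj]
variable (hT : T.IsTree) (r : V)

noncomputable def pa (v : V) : V :=
  letI := Classical.decEq V
  if h : v = r then r else (exists_parent hT r h).choose

lemma pa_spec {v : V} (hne : v ≠ r) :
    T.Adj v (pa hT r v) ∧ T.dist r (pa hT r v) + 1 = T.dist r v := by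
  rw [pa]
  rw [dif_neg hne]
  exact (exists_parent hT r hne).choose_spec

noncomputable def chl (G : SimpleGraph V) [DecidableRel G.Adj] (r v : V) : Finset V :=
  (G.neighborFinset v).filter (fun c => G.dist r c = G.dist r v + 1)

lemma mem_children {v c : V} :
    c ∈ chl T r v ↔ T.Adj v c ∧ T.dist r c = T.dist r v + 1 := by
  rw [chl, Finset.mem_filter, SimpleGraph.mem_neighborFinset]

lemma child_ne_root {v c : V} (h : c ∈ chl T r v) : c ≠ r := by
  rw [mem_children] at h
  intro he
  rw [he, SimpleGraph.dist_self] at h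
  omega

lemma child_pa {v c : V} (h : c ∈ chl T r v) : pa hT r c = v := by
  rw [mem_children] at h
  have hcr : c ≠ r := by
    intro he
    rw [he, SimpleGraph.dist_self] at h
    omega
  obtain ⟨hadj, hd⟩ := pa_spec hT r hcr
  exact parent_unique hT r hadj h.1.symm hd (by omega)

lemma pa_mem_children {v : V} (hne : v ≠ r) : v ∈ chl T r (pa hT r v) := by
  obtain ⟨hadj, hd⟩ := pa_spec hT r hne
  rw [mem_children]
  exact ⟨hadj.symm, by omega⟩

lemma nbr_classify {v x : V} (h : x ∈ T.neighborFinset v) :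
    x ∈ chl T r v ∨ (v ≠ r ∧ x = pa hT r v) := by
  rw [SimpleGraph.mem_neighborFinset] at h
  have hne := adj_dist_ne hT r h
  have h1 : T.dist r x ≤ T.dist r v + 1 := by
    have ht := hT.isConnected.dist_triangle (u := r) (v := v) (w := x)
    have : T.dist v x = 1 := SimpleGraph.dist_eq_one_iff_adj.2 h
    omega
  have h2 : T.dist r v ≤ T.dist r x + 1 := by
    have ht := hT.isConnected.dist_triangle (u := r) (v := x) (w := v)
    have : T.dist x v = 1 := SimpleGraph.dist_eq_one_iff_adj.2 h.symm
    omega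
  rcases Nat.lt_or_ge (T.dist r x) (T.dist r v) with hlt | hge
  · right
    have hvr : v ≠ r := by
      intro he
      rw [he, SimpleGraph.dist_self] at hlt
      omega
    refine ⟨hvr, ?_⟩
    obtain ⟨hadj, hd⟩ := pa_spec hT r hvr
    exact parent_unique hT r h hadj (by omega) hd
  · left
    rw [mem_children]
    exact ⟨h, by omega⟩

lemma filter_not_eq_pa {v : V} (hne : v ≠ r) :
    (T.neighborFinset v).filter (fun c => ¬(T.dist r c = T.dist r v + 1)) = {pa hT r v} := by
  ext x
  rw [Finset.mem_filter, Finset.mem_singleton]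
  constructor
  · rintro ⟨hx, hnd⟩
    rcases nbr_classify hT r hx with hc | ⟨_, he⟩
    · rw [mem_children] at hc
      exact absurd hc.2 hnd
    · exact he
  · intro he
    subst he
    obtain ⟨hadj, hd⟩ := pa_spec hT r hne
    refine ⟨SimpleGraph.mem_neighborFinset _ _ _ |>.2 hadj, by omega⟩

lemma sum_nbrs {M : Type} [AddCommMonoid M] {v : V} (hne : v ≠ r) (f : V → M) :
    ∑ x ∈ T.neighborFinset v, f x = f (pa hT r v) + ∑ c ∈ chl T r v, f c := by
  classical
  have := Finset.sum_filter_add_sum_filter_not (T.neighborFinset v)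
    (fun c => T.dist r c = T.dist r v + 1) f
  rw [filter_not_eq_pa hT r hne, Finset.sum_singleton] at this
  rw [← this, chl]
  exact (add_comm _ _)

include hT in
lemma degree_children {v : V} (hne : v ≠ r) :
    T.degree v = (chl T r v).card + 1 := by
  classical
  have h1 := Finset.card_filter_add_card_filter_not
    (s := T.neighborFinset v) (p := fun c => T.dist r c = T.dist r v + 1)
  rw [filter_not_eq_pa hT r hne, Finset.card_singleton,
    SimpleGraph.card_neighborFinset_eq_degree] at h1
  rw [chl]
  omega

lemma nbrs_root : T.neighborFinset r = chl T r r := by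
  ext x
  rw [mem_children, SimpleGraph.mem_neighborFinset]
  constructor
  · intro h
    refine ⟨h, ?_⟩
    rw [SimpleGraph.dist_self, zero_add]
    exact SimpleGraph.dist_eq_one_iff_adj.2 h
  · exact fun h => h.1

lemma degree_children_root : T.degree r = (chl T r r).card := by
  rw [← SimpleGraph.card_neighborFinset_eq_degree, nbrs_root]

end Tree3

section Main
variable {V : Type} [Fintype V] {T : SimpleGraph V} [DecidableRel T.Adj] {p : ℕ}

structure Setup (V : Type) [Fintype V] (T : SimpleGraph V) [DecidableRel T.Adj] (p : ℕ) : Type where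
  hT : T.IsTree
  r : V
  hp : 2 ≤ p
  hcard : 8 ≤ Fintype.card (Fin p → ZMod 2)
  hch : ∀ u : V, (chl T r u).card + 4 ≤ Fintype.card (Fin p → ZMod 2)
  hroot2 : 2 ≤ (chl T r r).card

noncomputable def Cset (S : Setup V T p) (u : V) (q : (Fin p → ZMod 2) × (Fin p → ZMod 2)) :
    Finset (Fin p → ZMod 2) :=
  letI := Classical.decEq V
  if u = S.r then
    (root_choice (pi_add_self p) S.hcard (sum_univ_pi_zmod2 p S.hp)
      ((chl T S.r S.r).card) S.hroot2 (S.hch S.r)).choose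
  else
    (local_choice (pi_add_self p) S.hcard (sum_univ_pi_zmod2 p S.hp)
      q.1 q.2 ((chl T S.r u).card) (S.hch u)).choose

lemma Cset_card (S : Setup V T p) (u : V) (q : (Fin p → ZMod 2) × (Fin p → ZMod 2)) :
    (Cset S u q).card = (chl T S.r u).card := by
  rw [Cset]
  split_ifs with h
  · subst h
    exact (root_choice (pi_add_self p) S.hcard (sum_univ_pi_zmod2 p S.hp)
      ((chl T S.r S.r).card) S.hroot2 (S.hch S.r)).choose_spec.1
  · exact (local_choice (pi_add_self p) S.hcard (sum_univ_pi_zmod2 p S.hp)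
      q.1 q.2 ((chl T S.r u).card) (S.hch u)).choose_spec.1

noncomputable def asg (S : Setup V T p) (u : V) (q : (Fin p → ZMod 2) × (Fin p → ZMod 2))
    (c : V) : Fin p → ZMod 2 :=
  letI := Classical.decEq V
  if h : c ∈ chl T S.r u then
    ((Finset.equivOfCardEq (Cset_card S u q).symm) ⟨c, h⟩ : Fin p → ZMod 2)
  else 0

lemma asg_mem (S : Setup V T p) (u : V) (q : (Fin p → ZMod 2) × (Fin p → ZMod 2)) {c : V}
    (h : c ∈ chl T S.r u) : asg S u q c ∈ Cset S u q := by
  rw [asg]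
  letI := Classical.decEq V
  rw [dif_pos h]
  exact ((Finset.equivOfCardEq (Cset_card S u q).symm) ⟨c, h⟩).2

lemma asg_inj (S : Setup V T p) (u : V) (q : (Fin p → ZMod 2) × (Fin p → ZMod 2)) {c₁ c₂ : V}
    (h1 : c₁ ∈ chl T S.r u) (h2 : c₂ ∈ chl T S.r u)
    (he : asg S u q c₁ = asg S u q c₂) : c₁ = c₂ := by
  rw [asg, asg] at he
  letI := Classical.decEq V
  rw [dif_pos h1, dif_pos h2] at he
  have := (Finset.equivOfCardEq (Cset_card S u q).symm).injective
    (Subtype.coe_injective he)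
  exact congrArg Subtype.val this

lemma asg_sum (S : Setup V T p) (u : V) (q : (Fin p → ZMod 2) × (Fin p → ZMod 2)) :
    ∑ c ∈ chl T S.r u, asg S u q c = ∑ x ∈ Cset S u q, x := by
  letI := Classical.decEq V
  refine Finset.sum_bij (fun c hc => ((Finset.equivOfCardEq (Cset_card S u q).symm) ⟨c, hc⟩ : Fin p → ZMod 2)) ?_ ?_ ?_ ?_
  · intro a ha
    exact ((Finset.equivOfCardEq (Cset_card S u q).symm) ⟨a, ha⟩).2
  · intro a₁ h₁ a₂ h₂ he
    have := (Finset.equivOfCardEq (Cset_card S u q).symm).injective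
      (Subtype.coe_injective he)
    exact congrArg Subtype.val this
  · intro b hb
    refine ⟨((Finset.equivOfCardEq (Cset_card S u q).symm).symm ⟨b, hb⟩ : V),
      ((Finset.equivOfCardEq (Cset_card S u q).symm).symm ⟨b, hb⟩).2, ?_⟩
    simp only [Subtype.coe_eta, Equiv.apply_symm_apply]
  · intro a ha
    rw [asg]
    rw [dif_pos ha]

noncomputable def Wt (S : Setup V T p) (u : V) (q : (Fin p → ZMod 2) × (Fin p → ZMod 2)) :
    Fin p → ZMod 2 :=
  letI := Classical.decEq V
  (if u = S.r then 0 else q.1) + ∑ c ∈ chl T S.r u, asg S u q c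

noncomputable def ar (S : Setup V T p) (u : V) : (Fin p → ZMod 2) × (Fin p → ZMod 2) :=
  letI := Classical.decEq V
  if h : u = S.r then (0, 0)
  else
    (asg S (pa S.hT S.r u) (ar S (pa S.hT S.r u)) u,
     Wt S (pa S.hT S.r u) (ar S (pa S.hT S.r u)))
termination_by T.dist S.r u
decreasing_by
  all_goals
    have := (pa_spec S.hT S.r h).2
    omega

lemma ar_ne (S : Setup V T p) {u : V} (hu : u ≠ S.r) :
    ar S u = (asg S (pa S.hT S.r u) (ar S (pa S.hT S.r u)) u,
     Wt S (pa S.hT S.r u) (ar S (pa S.hT S.r u))) := by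
  conv_lhs => rw [ar.eq_def]
  simp only [dif_neg hu]

noncomputable def ecf (S : Setup V T p) : Sym2 V → (Fin p → ZMod 2) :=
  Sym2.lift ⟨fun x y =>
    if T.dist S.r x < T.dist S.r y then (ar S y).1
    else if T.dist S.r y < T.dist S.r x then (ar S x).1
    else 0,
  by
    intro x y
    dsimp only
    rcases lt_trichotomy (T.dist S.r x) (T.dist S.r y) with h | h | h
    · rw [if_pos h, if_neg (by omega), if_pos h]
    · rw [if_neg (by omega), if_neg (by omega), if_neg (by omega), if_neg (by omega)]
    · rw [if_neg (by omega), if_pos h, if_pos h]⟩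

lemma ecf_child (S : Setup V T p) {v c : V} (hc : c ∈ chl T S.r v) :
    ecf S s(v, c) = asg S v (ar S v) c := by
  have hd : T.dist S.r c = T.dist S.r v + 1 := ((mem_children S.r).1 hc).2
  have hcr : c ≠ S.r := child_ne_root S.r hc
  rw [ecf, Sym2.lift_mk]
  dsimp only
  rw [if_pos (by omega)]
  rw [ar_ne S hcr]
  dsimp only
  rw [child_pa S.hT S.r hc]

lemma ecf_pa (S : Setup V T p) {v : V} (hv : v ≠ S.r) :
    ecf S s(v, pa S.hT S.r v) = (ar S v).1 := by
  have hd : T.dist S.r (pa S.hT S.r v) + 1 = T.dist S.r v := (pa_spec S.hT S.r hv).2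
  rw [ecf, Sym2.lift_mk]
  dsimp only
  rw [if_neg (by omega), if_pos (by omega)]

lemma wgt_eq (S : Setup V T p) (v : V) :
    ∑ x ∈ T.neighborFinset v, ecf S s(x, v) = Wt S v (ar S v) := by
  by_cases hv : v = S.r
  · subst hv
    rw [nbrs_root S.r, Wt, if_pos rfl, zero_add]
    apply Finset.sum_congr rfl
    intro c hc
    rw [Sym2.eq_swap]
    exact ecf_child S hc
  · rw [sum_nbrs S.hT S.r hv (fun x => ecf S s(x, v)), Wt, if_neg hv]
    congr 1
    · rw [Sym2.eq_swap]
      exact ecf_pa S hv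
    · apply Finset.sum_congr rfl
      intro c hc
      rw [Sym2.eq_swap]
      exact ecf_child S hc

def Good (S : Setup V T p) (u : V) : Prop :=
  u = S.r ∨ ((ar S u).1 ≠ 0 ∧ (ar S u).2 ≠ (ar S u).1)

lemma cprops (S : Setup V T p) (u : V) (hg : Good S u) :
    (∀ x ∈ Cset S u (ar S u), x ≠ 0) ∧
    (u ≠ S.r → ∀ x ∈ Cset S u (ar S u), x ≠ (ar S u).1) ∧
    Wt S u (ar S u) ∉ Cset S u (ar S u) ∧
    (u ≠ S.r → Wt S u (ar S u) ≠ (ar S u).2) := by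
  by_cases hu : u = S.r
  · subst hu
    have hspec := (root_choice (pi_add_self p) S.hcard (sum_univ_pi_zmod2 p S.hp)
      ((chl T S.r S.r).card) S.hroot2 (S.hch S.r)).choose_spec
    have hC : Cset S S.r (ar S S.r) = (root_choice (pi_add_self p) S.hcard
        (sum_univ_pi_zmod2 p S.hp) ((chl T S.r S.r).card) S.hroot2 (S.hch S.r)).choose := by
      rw [Cset, if_pos rfl]
    have hW : Wt S S.r (ar S S.r) = ∑ x ∈ Cset S S.r (ar S S.r), x := by
      rw [Wt, if_pos rfl, zero_add, asg_sum]
    refine ⟨?_, fun h => absurd rfl h, ?_, fun h => absurd rfl h⟩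
    · rw [hC]; exact hspec.2.1
    · rw [hW, hC]; exact hspec.2.2
  · rcases hg with h | ⟨h1, h2⟩
    · exact absurd h hu
    have hspec := (local_choice (pi_add_self p) S.hcard (sum_univ_pi_zmod2 p S.hp)
      (ar S u).1 (ar S u).2 ((chl T S.r u).card) (S.hch u)).choose_spec
    have hC : Cset S u (ar S u) = (local_choice (pi_add_self p) S.hcard
        (sum_univ_pi_zmod2 p S.hp) (ar S u).1 (ar S u).2 ((chl T S.r u).card)
        (S.hch u)).choose := by
      rw [Cset, if_neg hu]
    have hW : Wt S u (ar S u) = (ar S u).1 + ∑ x ∈ Cset S u (ar S u), x := by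
      rw [Wt, if_neg hu, asg_sum]
    obtain ⟨hP1, hP2, hP3⟩ := hspec.2 h1 h2
    refine ⟨?_, ?_, ?_, ?_⟩
    · intro x hx
      rw [hC] at hx
      exact (hP1 x hx).1
    · intro _ x hx
      rw [hC] at hx
      exact (hP1 x hx).2
    · rw [hW, hC]
      exact hP2
    · intro _
      rw [hW, hC]
      exact hP3

lemma good (S : Setup V T p) : ∀ u : V, Good S u := by
  have H : ∀ (n : ℕ) (u : V), T.dist S.r u = n → Good S u := by
    intro n
    induction n using Nat.strong_induction_on with
    | _ n ih =>
      intro u hn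
      by_cases hu : u = S.r
      · exact Or.inl hu
      · right
        have hpd := (pa_spec S.hT S.r hu).2
        have hgp : Good S (pa S.hT S.r u) := by
          exact ih (T.dist S.r (pa S.hT S.r u)) (by omega) _ rfl
        obtain ⟨cp1, cp2, cp3, cp4⟩ := cprops S (pa S.hT S.r u) hgp
        have hmem : u ∈ chl T S.r (pa S.hT S.r u) := pa_mem_children S.hT S.r hu
        rw [ar_ne S hu]
        dsimp only
        constructor
        · exact cp1 _ (asg_mem S _ _ hmem)
        · intro he
          apply cp3
          rw [he]
          exact asg_mem S _ _ hmem
  exact fun u => H (T.dist S.r u) u rfl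

lemma proper_ecf (S : Setup V T p) {u v w : V} (huv : T.Adj u v) (huw : T.Adj u w)
    (hne : v ≠ w) : ecf S s(u, v) ≠ ecf S s(u, w) := by
  rcases nbr_classify S.hT S.r (x := v) (v := u) (by rw [SimpleGraph.mem_neighborFinset]; exact huv) with hcv | ⟨hur, hev⟩
  · rcases nbr_classify S.hT S.r (x := w) (v := u) (by rw [SimpleGraph.mem_neighborFinset]; exact huw) with hcw | ⟨hur, hew⟩
    · rw [ecf_child S hcv, ecf_child S hcw]
      intro he
      exact hne (asg_inj S u (ar S u) hcv hcw he)
    · rw [ecf_child S hcv, hew, ecf_pa S hur]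
      exact ((cprops S u (good S u)).2.1 hur _ (asg_mem S u (ar S u) hcv))
  · rcases nbr_classify S.hT S.r (x := w) (v := u) (by rw [SimpleGraph.mem_neighborFinset]; exact huw) with hcw | ⟨hur2, hew⟩
    · rw [ecf_child S hcw, hev, ecf_pa S hur]
      exact ((cprops S u (good S u)).2.1 hur _ (asg_mem S u (ar S u) hcw)).symm
    · exact absurd (hev.trans hew.symm) hne

lemma wgt_child_ne (S : Setup V T p) {u v : V} (hc : v ∈ chl T S.r u) :
    ∑ x ∈ T.neighborFinset v, ecf S s(x, v) ≠ ∑ x ∈ T.neighborFinset u, ecf S s(x, u) := by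
  have hvr : v ≠ S.r := child_ne_root S.r hc
  rw [wgt_eq S v, wgt_eq S u]
  have cp4 := (cprops S v (good S v)).2.2.2 hvr
  have har2 : (ar S v).2 = Wt S u (ar S u) := by
    rw [ar_ne S hvr]
    dsimp only
    rw [child_pa S.hT S.r hc]
  rw [har2] at cp4
  exact cp4

lemma weights_ecf (S : Setup V T p) {u v : V} (huv : T.Adj u v) :
    ∑ x ∈ T.neighborFinset u, ecf S s(x, u) ≠ ∑ x ∈ T.neighborFinset v, ecf S s(x, v) := by
  rcases nbr_classify S.hT S.r (x := v) (v := u) (by rw [SimpleGraph.mem_neighborFinset]; exact huv) with hcv | ⟨hur, hev⟩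
  · exact (wgt_child_ne S hcv).symm
  · have : u ∈ chl T S.r v := by
      rw [hev]
      exact pa_mem_children S.hT S.r hur
    exact wgt_child_ne S this

end Main

/-- Let `T` be a tree with maximum degree `Δ(T) = 2^p - 3 ≥ 5` such that every vertex of
degree `2` has at least one neighbor of degree `2`.  If `T` is not a `(2^p - 3)`-regular
tree, then `T` has a `(ℤ₂)^p`-twin edge coloring. -/
theorem tree_Z2p_twin_coloring {V : Type} [Fintype V] (T : SimpleGraph V)
    [DecidableRel T.Adj] (hT : T.IsTree) (p : ℕ)
    (hΔ : T.maxDegree = 2 ^ p - 3) (h5 : 5 ≤ T.maxDegree)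
    (hdeg2 : ∀ v : V, T.degree v = 2 → ∃ u : V, T.Adj v u ∧ T.degree u = 2)
    (hnreg : ¬ IsRegularTreeDeg T (2 ^ p - 3)) :
    ∃ f : Sym2 V → (Fin p → ZMod 2), IsTwinEdgeColoring T f := by
  classical
  have hcardA : Fintype.card (Fin p → ZMod 2) = 2 ^ p := by
    rw [Fintype.card_fun, ZMod.card, Fintype.card_fin]
  have hpow : 8 ≤ 2 ^ p := by
    rw [hΔ] at h5
    omega
  have hp2 : 2 ≤ p := by
    by_contra hc
    push_neg at hc
    have : 2 ^ p ≤ 2 ^ 1 := Nat.pow_le_pow_right (by norm_num) (by omega)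
    omega
  have hcard8 : 8 ≤ Fintype.card (Fin p → ZMod 2) := by rw [hcardA]; exact hpow
  unfold IsRegularTreeDeg at hnreg
  push_neg at hnreg
  obtain ⟨r, hr1, hr2⟩ := hnreg
  have hne : Nonempty V := hT.isConnected.nonempty
  obtain ⟨vm, hvm⟩ := T.exists_maximal_degree_vertex
  have hdegpos : ∀ v : V, 0 < T.degree v := by
    intro v
    rw [SimpleGraph.degree_pos_iff_exists_adj]
    by_cases hv : v = vm
    · subst hv
      have : 0 < T.degree v := by omega
      rw [SimpleGraph.degree_pos_iff_exists_adj] at this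
      exact this
    · obtain ⟨u, hu, _⟩ := exists_parent hT vm hv
      exact ⟨u, hu⟩
  have hrdeg2 : 2 ≤ T.degree r := by
    have := hdegpos r
    omega
  have hrdegU : T.degree r + 4 ≤ 2 ^ p := by
    have h1 := T.degree_le_maxDegree r
    rw [hΔ] at h1
    omega
  have hch : ∀ u : V, (chl T r u).card + 4 ≤ Fintype.card (Fin p → ZMod 2) := by
    intro u
    rw [hcardA]
    by_cases hu : u = r
    · subst hu
      rw [← degree_children_root]
      exact hrdegU
    · have h1 := degree_children hT r hu
      have h2 := T.degree_le_maxDegree u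
      rw [hΔ] at h2
      omega
  have hroot2 : 2 ≤ (chl T r r).card := by
    rw [← degree_children_root]
    exact hrdeg2
  refine ⟨ecf (⟨hT, r, hp2, hcard8, hch, hroot2⟩ : Setup V T p), ?_, ?_⟩
  · intro u v w huv huw hvw
    exact proper_ecf _ huv huw hvw
  · intro u v huv
    exact weights_ecf _ huv
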